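/- arXiv:2305.05565 — 2 statements merged into one kernel-verified Lean document; each statement's English description precedes it below -/
import Mathlib

section
/- In the asymptotic Bernoulli setting, assume additionally that m(n)·p(n)/log n → ∞ as n → ∞ (dense regime). Then for every D ≥ 1 there exists a constant c > 0 such that for all sufficiently large n, P( val_IP ≥ (c/p)·log( m·p / log n ) ) ≥ 1 − n^{−D}. -/
open Classical Finset Filter
open scoped ENNReal

/-- Probability weight of a 0/1 matrix with i.i.d. Bernoulli(p) entries. -/
noncomputable def mWeight (m n : ℕ) (p : ℝ) (ω : Fin m → Fin n → Bool) : ℝ :=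
  ∏ i : Fin m, ∏ j : Fin n, if ω i j then p else 1 - p

/-- Probability of an event under the i.i.d. Bernoulli(p) matrix distribution. -/
noncomputable def mProb (m n : ℕ) (p : ℝ) (P : (Fin m → Fin n → Bool) → Prop) : ℝ :=
  ∑ ω : Fin m → Fin n → Bool, if P ω then mWeight m n p ω else 0

/-- Feasibility for the LP: `A x ≥ 1` entrywise. -/
def feasLP {m n : ℕ} (ω : Fin m → Fin n → Bool) (x : Fin n → ℝ) : Prop :=
  ∀ i : Fin m, 1 ≤ ∑ j : Fin n, (if ω i j then (1 : ℝ) else 0) * x j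

/-- Feasibility of a 0/1 vector. -/
def feasIP {m n : ℕ} (ω : Fin m → Fin n → Bool) (x : Fin n → Bool) : Prop :=
  feasLP ω fun j => if x j then (1 : ℝ) else 0

/-- The IP value: minimal number of ones of a feasible 0/1 vector (`⊤` if infeasible). -/
noncomputable def valIP {m n : ℕ} (ω : Fin m → Fin n → Bool) : ℝ≥0∞ :=
  sInf {v | ∃ x : Fin n → Bool, feasIP ω x ∧
    v = ((Finset.univ.filter fun j : Fin n => x j = true).card : ℝ≥0∞)}











noncomputable def rowWeight (n : ℕ) (p : ℝ) (r : Fin n → Bool) : ℝ :=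
  ∏ j : Fin n, if r j then p else 1 - p

lemma mWeight_eq (m n : ℕ) (p : ℝ) (ω : Fin m → Fin n → Bool) :
    mWeight m n p ω = ∏ i : Fin m, rowWeight n p (ω i) := rfl

lemma sum_fun_prod {ι β : Type*} [Fintype ι] [DecidableEq ι] [Fintype β] (g : ι → β → ℝ) :
    ∑ f : ι → β, ∏ i, g i (f i) = ∏ i, ∑ b, g i b := (Fintype.prod_sum _).symm

lemma sum_rowWeight (n : ℕ) (p : ℝ) : ∑ r : Fin n → Bool, rowWeight n p r = 1 := by
  have h : ∑ r : Fin n → Bool, rowWeight n p r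
      = ∏ j : Fin n, ∑ b : Bool, (if b then p else 1 - p) :=
    sum_fun_prod (fun (j : Fin n) (b : Bool) => if b then p else 1 - p)
  rw [h]
  have : ∀ j : Fin n, (∑ b : Bool, (if b then p else 1 - p)) = 1 := by
    intro j; rw [Fintype.sum_bool]; norm_num
  simp [this]

lemma sum_mWeight (m n : ℕ) (p : ℝ) : ∑ ω : Fin m → Fin n → Bool, mWeight m n p ω = 1 := by
  have h : ∑ ω : Fin m → Fin n → Bool, mWeight m n p ω
      = ∏ i : Fin m, ∑ r : Fin n → Bool, rowWeight n p r :=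
    sum_fun_prod (fun (i : Fin m) (r : Fin n → Bool) => rowWeight n p r)
  rw [h]
  simp [sum_rowWeight]

lemma rowWeight_nonneg {n : ℕ} {p : ℝ} (h0 : 0 ≤ p) (h1 : p ≤ 1) (r : Fin n → Bool) :
    0 ≤ rowWeight n p r :=
  Finset.prod_nonneg fun j _ => by by_cases h : r j <;> simp [h] <;> linarith

lemma mWeight_nonneg {m n : ℕ} {p : ℝ} (h0 : 0 ≤ p) (h1 : p ≤ 1) (ω : Fin m → Fin n → Bool) :
    0 ≤ mWeight m n p ω := by
  rw [mWeight_eq]; exact Finset.prod_nonneg fun i _ => rowWeight_nonneg h0 h1 _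

lemma mProb_compl {m n : ℕ} {p : ℝ} (P : (Fin m → Fin n → Bool) → Prop) :
    mProb m n p P = 1 - mProb m n p (fun ω => ¬ P ω) := by
  have : mProb m n p P + mProb m n p (fun ω => ¬ P ω) = 1 := by
    unfold mProb
    rw [← Finset.sum_add_distrib]
    refine Eq.trans (Finset.sum_congr rfl ?_) (sum_mWeight m n p)
    intro ω _
    by_cases h : P ω <;> simp [h]
  linarith

lemma mProb_union_bound {m n : ℕ} {p : ℝ} (h0 : 0 ≤ p) (h1 : p ≤ 1) {α : Type*}
    (s : Finset α) (P : (Fin m → Fin n → Bool) → Prop) (Q : α → (Fin m → Fin n → Bool) → Prop)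
    (h : ∀ ω, P ω → ∃ x ∈ s, Q x ω) :
    mProb m n p P ≤ ∑ x ∈ s, mProb m n p (Q x) := by
  unfold mProb
  rw [Finset.sum_comm]
  apply Finset.sum_le_sum
  intro ω _
  by_cases hP : P ω
  · obtain ⟨x₀, hx₀s, hx₀⟩ := h ω hP
    calc (if P ω then mWeight m n p ω else 0) = mWeight m n p ω := if_pos hP
      _ = (if Q x₀ ω then mWeight m n p ω else 0) := (if_pos hx₀).symm
      _ ≤ ∑ x ∈ s, (if Q x ω then mWeight m n p ω else 0) :=
        Finset.single_le_sum (f := fun x => if Q x ω then mWeight m n p ω else 0)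
          (fun x _ => by
            show (0:ℝ) ≤ if Q x ω then mWeight m n p ω else 0
            by_cases h : Q x ω
            · rw [if_pos h]; exact mWeight_nonneg h0 h1 ω
            · rw [if_neg h]) hx₀s
  · rw [if_neg hP]
    exact Finset.sum_nonneg fun x _ => by
      by_cases h : Q x ω
      · rw [if_pos h]; exact mWeight_nonneg h0 h1 ω
      · rw [if_neg h]

lemma feasIP_iff {m n : ℕ} (ω : Fin m → Fin n → Bool) (x : Fin n → Bool) :
    feasIP ω x ↔ ∀ i : Fin m, ∃ j : Fin n, ω i j = true ∧ x j = true := by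
  unfold feasIP feasLP
  apply forall_congr'
  intro i
  have hsum : (∑ j : Fin n, (if ω i j then (1 : ℝ) else 0) * (if x j then (1:ℝ) else 0))
      = ((univ.filter fun j => ω i j = true ∧ x j = true).card : ℝ) := by
    rw [← Finset.sum_boole]
    apply Finset.sum_congr rfl
    intro j _
    by_cases h1 : ω i j = true <;> by_cases h2 : x j = true <;> simp [h1, h2]
  rw [hsum]
  rw [show (1:ℝ) = ((1:ℕ):ℝ) from by norm_num, Nat.cast_le]
  rw [Nat.one_le_iff_ne_zero, ← Nat.pos_iff_ne_zero, Finset.card_pos]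
  constructor
  · rintro ⟨j, hj⟩
    rw [Finset.mem_filter] at hj
    exact ⟨j, hj.2⟩
  · rintro ⟨j, hj⟩
    exact ⟨j, Finset.mem_filter.mpr ⟨Finset.mem_univ j, hj⟩⟩

lemma mProb_feas {m n : ℕ} {p : ℝ} (x : Fin n → Bool) :
    mProb m n p (fun ω => feasIP ω x)
      = (1 - (1 - p) ^ (univ.filter fun j : Fin n => x j = true).card) ^ m := by
  set k := (univ.filter fun j : Fin n => x j = true).card with hk
  set E : (Fin n → Bool) → Prop := fun r => ∃ j, r j = true ∧ x j = true with hE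
  set q : ℝ := ∑ r : Fin n → Bool, (if E r then 1 else 0) * rowWeight n p r with hq
  have step1 : mProb m n p (fun ω => feasIP ω x) = q ^ m := by
    unfold mProb
    have h1 : ∀ ω : Fin m → Fin n → Bool,
        (if feasIP ω x then mWeight m n p ω else 0)
          = ∏ i : Fin m, ((if E (ω i) then (1:ℝ) else 0) * rowWeight n p (ω i)) := by
      intro ω
      by_cases h : feasIP ω x
      · rw [if_pos h, mWeight_eq]
        refine (Finset.prod_congr rfl fun i _ => ?_).symm
        rw [if_pos ((feasIP_iff ω x).mp h i), one_mul]
      · rw [if_neg h]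
        have : ∃ i : Fin m, ¬ E (ω i) := by
          by_contra hc
          push_neg at hc
          exact h ((feasIP_iff ω x).mpr fun i => hc i)
        obtain ⟨i, hi⟩ := this
        refine (Finset.prod_eq_zero (Finset.mem_univ i) ?_).symm
        rw [if_neg hi, zero_mul]
    refine Eq.trans (Finset.sum_congr rfl (fun ω _ => h1 ω)) ?_
    have h2 : (∑ ω : Fin m → Fin n → Bool,
          ∏ i : Fin m, ((if E (ω i) then (1:ℝ) else 0) * rowWeight n p (ω i)))
        = ∏ _i : Fin m, q :=
      sum_fun_prod (fun (_i : Fin m) (r : Fin n → Bool) =>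
        (if E r then (1:ℝ) else 0) * rowWeight n p r)
    rw [h2, Finset.prod_const, Finset.card_univ, Fintype.card_fin]
  have step2 : q = 1 - (1 - p) ^ k := by
    have hB : (∑ r : Fin n → Bool, (if ¬ E r then (1:ℝ) else 0) * rowWeight n p r)
        = (1 - p) ^ k := by
      have hr : ∀ r : Fin n → Bool, (if ¬ E r then (1:ℝ) else 0) * rowWeight n p r
          = ∏ j : Fin n, ((if ¬ (r j = true ∧ x j = true) then (1:ℝ) else 0)
              * (if r j then p else 1 - p)) := by
        intro r
        by_cases h : E r
        · rw [if_neg (not_not_intro h), zero_mul]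
          obtain ⟨j, hj⟩ := h
          refine (Finset.prod_eq_zero (Finset.mem_univ j) ?_).symm
          rw [if_neg (not_not_intro hj), zero_mul]
        · rw [if_pos h, one_mul]
          unfold rowWeight
          refine (Finset.prod_congr rfl fun j _ => ?_).symm
          have : ¬ (r j = true ∧ x j = true) := fun hc => h ⟨j, hc⟩
          rw [if_pos this, one_mul]
      refine Eq.trans (Finset.sum_congr rfl (fun r _ => hr r)) ?_
      have h3 : (∑ r : Fin n → Bool, ∏ j : Fin n,
            ((if ¬ (r j = true ∧ x j = true) then (1:ℝ) else 0)
              * (if r j then p else 1 - p)))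
          = ∏ j : Fin n, ∑ b : Bool, ((if ¬ (b = true ∧ x j = true) then (1:ℝ) else 0)
              * (if b then p else 1 - p)) :=
        sum_fun_prod (fun (j : Fin n) (b : Bool) =>
          (if ¬ (b = true ∧ x j = true) then (1:ℝ) else 0) * (if b then p else 1 - p))
      rw [h3]
      have h4 : ∀ j : Fin n, (∑ b : Bool, ((if ¬ (b = true ∧ x j = true) then (1:ℝ) else 0)
            * (if b then p else 1 - p))) = if x j = true then 1 - p else 1 := by
        intro j
        rw [Fintype.sum_bool]
        by_cases h : x j = true <;> simp [h] <;> ring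
      refine Eq.trans (Finset.prod_congr rfl (fun j _ => h4 j)) ?_
      rw [Finset.prod_ite (fun _ => (1:ℝ) - p) (fun _ => (1:ℝ))]
      simp [hk]
    have hqB : q + (∑ r : Fin n → Bool, (if ¬ E r then (1:ℝ) else 0) * rowWeight n p r)
        = 1 := by
      rw [hq, ← Finset.sum_add_distrib]
      refine Eq.trans (Finset.sum_congr rfl ?_) (sum_rowWeight n p)
      intro r _
      by_cases h : E r <;> simp [h]
    linarith
  rw [step1, step2]


lemma count_small (n K : ℕ) (hn : 1 ≤ n) :
    ((univ : Finset (Fin n → Bool)).filter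
      (fun x => (univ.filter fun j : Fin n => x j = true).card ≤ K)).card
      ≤ (K+1) * n ^ K := by
  classical
  set F : (Fin n → Bool) → Finset (Fin n) := fun x => univ.filter fun j => x j = true with hF
  set t : Finset (Finset (Fin n)) :=
    (Finset.range (K+1)).biUnion fun j => Finset.powersetCard j (univ : Finset (Fin n)) with ht
  have hmaps : ∀ x ∈ (univ : Finset (Fin n → Bool)).filter
      (fun x => (univ.filter fun j : Fin n => x j = true).card ≤ K), F x ∈ t := by
    intro x hx
    rw [Finset.mem_filter] at hx
    rw [ht, Finset.mem_biUnion]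
    refine ⟨(F x).card, Finset.mem_range.mpr (Nat.lt_succ_of_le hx.2), ?_⟩
    exact Finset.mem_powersetCard.mpr ⟨Finset.subset_univ _, rfl⟩
  have hinj : Set.InjOn F ((univ : Finset (Fin n → Bool)).filter
      (fun x => (univ.filter fun j : Fin n => x j = true).card ≤ K)) := by
    intro x _ y _ hxy
    funext j
    have hmem : (j ∈ F x) ↔ (j ∈ F y) := by rw [hxy]
    simp only [hF, Finset.mem_filter, Finset.mem_univ, true_and] at hmem
    cases hx : x j <;> cases hy : y j <;> simp_all
  have h1 := Finset.card_le_card_of_injOn F hmaps hinj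
  refine h1.trans ?_
  refine (Finset.card_biUnion_le).trans ?_
  have h2 : ∀ j ∈ Finset.range (K+1),
      (Finset.powersetCard j (univ : Finset (Fin n))).card ≤ n ^ K := by
    intro j hj
    rw [Finset.card_powersetCard, Finset.card_univ, Fintype.card_fin]
    calc n.choose j ≤ n ^ j := Nat.choose_le_pow n j
      _ ≤ n ^ K := Nat.pow_le_pow_right hn (Nat.lt_succ_iff.mp (Finset.mem_range.mp hj))
  calc ∑ j ∈ Finset.range (K+1), (Finset.powersetCard j (univ : Finset (Fin n))).card
      ≤ ∑ _j ∈ Finset.range (K+1), n ^ K := Finset.sum_le_sum h2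
    _ = (K+1) * n ^ K := by rw [Finset.sum_const, Finset.card_range, smul_eq_mul]

lemma exp_neg_two_le {p : ℝ} (hp0 : 0 ≤ p) (hp : p ≤ 1/2) : Real.exp (-(2*p)) ≤ 1 - p := by
  have h1 : (1:ℝ) + 2*p ≤ Real.exp (2*p) := by
    have := Real.add_one_le_exp (2*p); linarith
  have hpos : (0:ℝ) < 1 + 2*p := by linarith
  have h2 : Real.exp (-(2*p)) ≤ (1+2*p)⁻¹ := by
    rw [Real.exp_neg]
    exact inv_anti₀ hpos h1
  refine h2.trans ?_
  rw [inv_eq_one_div, div_le_iff₀ hpos]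
  nlinarith

lemma term_bound {p : ℝ} (hp0 : 0 ≤ p) (hp : p ≤ 1/2) {k K m : ℕ} (hk : k ≤ K) :
    (1 - (1-p)^k)^m ≤ Real.exp (-(m * Real.exp (-(2*p*K)))) := by
  have h1p0 : (0:ℝ) ≤ 1 - p := by linarith
  have h1p1 : (1:ℝ) - p ≤ 1 := by linarith
  have hy : Real.exp (-(2*p*K)) ≤ (1-p)^k := by
    have he : Real.exp (-(2*p*K)) = Real.exp (-(2*p))^K := by
      rw [← Real.exp_nat_mul]; ring_nf
    rw [he]
    calc Real.exp (-(2*p))^K ≤ (1-p)^K :=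
          pow_le_pow_left₀ (Real.exp_nonneg _) (exp_neg_two_le hp0 hp) K
      _ ≤ (1-p)^k := pow_le_pow_of_le_one h1p0 h1p1 hk
  have hyle1 : Real.exp (-(2*p*K)) ≤ 1 := by
    rw [Real.exp_le_one_iff]
    have : (0:ℝ) ≤ 2*p*K := by positivity
    linarith
  have hb0 : (0:ℝ) ≤ 1 - (1-p)^k := by
    have : (1-p)^k ≤ 1 := pow_le_one₀ h1p0 h1p1
    linarith
  calc (1 - (1-p)^k)^m ≤ (1 - Real.exp (-(2*p*K)))^m :=
        pow_le_pow_left₀ hb0 (by linarith) m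
    _ ≤ (Real.exp (-(Real.exp (-(2*p*K)))))^m :=
        pow_le_pow_left₀ (by linarith) (Real.one_sub_le_exp_neg _) m
    _ = Real.exp (-(m * Real.exp (-(2*p*K)))) := by
        rw [← Real.exp_nat_mul]; ring_nf


set_option maxHeartbeats 1600000 in
lemma final_numeric (D pn ln T L : ℝ) (K Mn n : ℕ)
    (hD : 1 ≤ D) (hpn0 : 0 < pn) (hpn1 : pn ≤ 1/2) (hlnge1 : 1 ≤ ln)
    (hn0 : 0 < (n:ℝ)) (hln : ln = Real.log n)
    (hT2 : 2 ≤ T) (hTD : 9 * D^2 / 4 + 1 ≤ T) (hL : L = Real.log T)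
    (hMr : (Mn:ℝ) = T * ln / pn) (hK8 : (K:ℝ) * (8*pn) ≤ L) :
    ((K:ℝ)+1) * (n:ℝ)^K * Real.exp (-((Mn:ℝ) * Real.exp (-(2*pn*(K:ℝ)))))
      ≤ (n:ℝ) ^ (-D) := by
  obtain ⟨U, hU⟩ : ∃ U : ℝ, U = Real.exp (L/4) := ⟨_, rfl⟩
  have hT0 : (0:ℝ) < T := by linarith
  have hL0 : (0:ℝ) ≤ L := by rw [hL]; exact Real.log_nonneg (by linarith)
  have hln0 : (0:ℝ) < ln := by linarith
  have hU0 : (0:ℝ) < U := by rw [hU]; exact Real.exp_pos _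
  have hU1 : (1:ℝ) ≤ U := by rw [hU]; exact Real.one_le_exp (by linarith)
  have hexpL : Real.exp L = T := by rw [hL]; exact Real.exp_log hT0
  have hU4 : U^4 = T := by
    rw [hU, ← Real.exp_nat_mul, show ((4:ℕ):ℝ) * (L/4) = L by push_cast; ring]
    exact hexpL
  have hU3e : U^3 = Real.exp (3 * (L/4)) := by
    rw [hU, ← Real.exp_nat_mul]; norm_num
  have hK0 : (0:ℝ) ≤ (K:ℝ) := Nat.cast_nonneg _
  have hMy : (K:ℝ) + (K:ℝ)*ln + D*ln ≤ (Mn:ℝ) * Real.exp (-(2*pn*(K:ℝ))) := by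
    have hy : Real.exp (-(L/4)) ≤ Real.exp (-(2*pn*(K:ℝ))) := by
      apply Real.exp_le_exp.mpr
      nlinarith
    have hMU : (Mn:ℝ) * Real.exp (-(L/4)) = U^3 * ln / pn := by
      rw [hMr, ← hU4, Real.exp_neg, hU]
      field_simp
    have hstep : (Mn:ℝ) * Real.exp (-(L/4)) ≤ (Mn:ℝ) * Real.exp (-(2*pn*(K:ℝ))) :=
      mul_le_mul_of_nonneg_left hy (Nat.cast_nonneg _)
    have hmain : (K:ℝ) + (K:ℝ)*ln + D*ln ≤ U^3 * ln / pn := by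
      rw [le_div_iff₀ hpn0]
      have e1 : (K:ℝ)*pn ≤ L/8 := by nlinarith
      have e2 : (K:ℝ)*pn*ln ≤ (L/8)*ln := mul_le_mul_of_nonneg_right e1 (by linarith)
      have hDp : D*pn ≤ D/2 := by nlinarith
      have e3 : D*pn*ln ≤ (D/2)*ln := mul_le_mul_of_nonneg_right hDp (by linarith)
      have e4 : (K:ℝ)*pn ≤ (L/8)*ln := by
        have h58 : L/8 * 1 ≤ L/8 * ln := mul_le_mul_of_nonneg_left hlnge1 (by linarith)
        linarith
      have hA3 : 3*(L/4) + 1 ≤ U^3 := by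
        rw [hU3e]; exact Real.add_one_le_exp _
      have hsq : (3*D/2)^2 ≤ (U^2)^2 := by nlinarith [hU4, hTD]
      have hU2 : 3*D/2 ≤ U^2 :=
        (pow_le_pow_iff_left₀ (by linarith : (0:ℝ) ≤ 3*D/2) (sq_nonneg U) two_ne_zero).mp hsq
      have e6 : D/2 ≤ U^3/3 := by nlinarith
      have e7 : L/4 + D/2 ≤ U^3 := by nlinarith
      have e8 : (L/4 + D/2)*ln ≤ U^3*ln := mul_le_mul_of_nonneg_right e7 (by linarith)
      nlinarith [e2, e3, e4, e8, hK0, hpn0.le, hln0.le]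
    calc (K:ℝ) + (K:ℝ)*ln + D*ln ≤ U^3 * ln / pn := hmain
      _ = (Mn:ℝ) * Real.exp (-(L/4)) := hMU.symm
      _ ≤ (Mn:ℝ) * Real.exp (-(2*pn*(K:ℝ))) := hstep
  have hB0 : (0:ℝ) ≤ Real.exp (-((Mn:ℝ) * Real.exp (-(2*pn*(K:ℝ))))) := (Real.exp_pos _).le
  have hnD : (n:ℝ) ^ (-D) = Real.exp (-(D*ln)) := by
    rw [Real.rpow_def_of_pos hn0, hln]; ring_nf
  have hA : ((K:ℝ)+1) * (n:ℝ)^K ≤ Real.exp ((K:ℝ) + (K:ℝ)*ln) := by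
    have h1 : ((K:ℝ)+1) ≤ Real.exp (K:ℝ) := Real.add_one_le_exp _
    have h2 : (n:ℝ)^K = Real.exp ((K:ℝ)*ln) := by
      rw [hln, Real.exp_nat_mul, Real.exp_log hn0]
    rw [h2, Real.exp_add]
    exact mul_le_mul_of_nonneg_right h1 (Real.exp_pos _).le
  calc ((K:ℝ)+1) * (n:ℝ)^K * Real.exp (-((Mn:ℝ) * Real.exp (-(2*pn*(K:ℝ)))))
      ≤ Real.exp ((K:ℝ) + (K:ℝ)*ln) * Real.exp (-((Mn:ℝ) * Real.exp (-(2*pn*(K:ℝ))))) :=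
        mul_le_mul_of_nonneg_right hA hB0
    _ = Real.exp ((K:ℝ) + (K:ℝ)*ln - (Mn:ℝ) * Real.exp (-(2*pn*(K:ℝ)))) := by
        rw [← Real.exp_add]; ring_nf
    _ ≤ Real.exp (-(D*ln)) := Real.exp_le_exp.mpr (by linarith)
    _ = (n:ℝ) ^ (-D) := hnD.symm

/-- In the dense regime `mp / log n → ∞`, for every `D ≥ 1` there is `c > 0`
such that for all large `n`, `P(val_IP ≥ (c/p) log(mp / log n)) ≥ 1 - n^{-D}`. -/
theorem stmt6 (m : ℕ → ℕ) (p : ℕ → ℝ) (δ : ℝ)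
    (hδ : 0 < δ ∧ δ < 1)
    (hp0 : ∀ n, 0 < p n ∧ p n ≤ 1)
    (hm : ∃ c C : ℝ, 0 < c ∧ 0 < C ∧ ∃ N : ℕ, ∀ n ≥ N,
      c * (n : ℝ) ^ c ≤ (m n : ℝ) ∧ (m n : ℝ) ≤ C * (n : ℝ) ^ C)
    (hp : ∃ N : ℕ, ∀ n ≥ N, (n : ℝ) ^ (-δ) ≤ p n ∧ p n ≤ 1 / 2)
    (hdense : Tendsto (fun n : ℕ => (m n : ℝ) * p n / Real.log n) atTop atTop) :
    ∀ D : ℝ, 1 ≤ D → ∃ c : ℝ, 0 < c ∧ ∃ N : ℕ, ∀ n ≥ N,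
      1 - (n : ℝ) ^ (-D) ≤
        mProb (m n) n (p n) (fun ω =>
          ENNReal.ofReal ((c / p n) * Real.log ((m n : ℝ) * p n / Real.log n)) ≤ valIP ω) := by
  intro D hD
  refine ⟨1/8, by norm_num, ?_⟩
  obtain ⟨N₂, hpN⟩ := hp
  obtain ⟨N₃, hTN⟩ := eventually_atTop.mp
    (hdense.eventually_ge_atTop (max 2 (9 * D^2 / 4 + 1)))
  refine ⟨max N₂ (max N₃ 3), ?_⟩
  intro n hn
  have hn2 : n ≥ N₂ := le_trans (le_max_left _ _) hn
  have hn3 : n ≥ N₃ := le_trans (le_trans (le_max_left _ _) (le_max_right _ _)) hn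
  have hn3' : (3:ℕ) ≤ n := le_trans (le_trans (le_max_right _ _) (le_max_right _ _)) hn
  set pn := p n with hpn
  set Mn := m n with hMn
  set ln := Real.log n with hlndef
  set T := (Mn : ℝ) * pn / ln with hT
  set L := Real.log T with hL
  set t' := (1/8 / pn) * L with ht'
  set K := Nat.floor t' with hKdef
  have hpn0 : 0 < pn := (hp0 n).1
  have hpn1 : pn ≤ 1/2 := (hpN n hn2).2
  have hpnle1 : pn ≤ 1 := by linarith
  have hnR0 : (0:ℝ) < n := by exact_mod_cast (by omega : 0 < n)
  have hlnge1 : 1 ≤ ln := by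
    rw [hlndef, Real.le_log_iff_exp_le hnR0]
    have h3 : (3:ℝ) ≤ n := by exact_mod_cast hn3'
    have := Real.exp_one_lt_d9
    linarith
  have hln0 : 0 < ln := by linarith
  have hTT₀ : max 2 (9 * D^2 / 4 + 1) ≤ T := hTN n hn3
  have hT2 : (2:ℝ) ≤ T := le_trans (le_max_left _ _) hTT₀
  have hTD : 9 * D^2 / 4 + 1 ≤ T := le_trans (le_max_right _ _) hTT₀
  have hT0 : (0:ℝ) < T := by linarith
  have hL0 : (0:ℝ) ≤ L := Real.log_nonneg (by rw [hL] at *; linarith)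
  have ht'0 : (0:ℝ) ≤ t' := by
    rw [ht']
    have : (0:ℝ) ≤ 1/8/pn := by positivity
    exact mul_nonneg this hL0
  have hMr : (Mn : ℝ) = T * ln / pn := by
    rw [hT]; field_simp
  have hK : (K:ℝ) ≤ t' := Nat.floor_le ht'0
  have hK8 : (K:ℝ) * (8*pn) ≤ L := by
    have h1 := mul_le_mul_of_nonneg_right hK (by linarith : (0:ℝ) ≤ 8*pn)
    have h9 : t' * (8*pn) = L := by rw [ht']; field_simp
    linarith
  set E : (Fin Mn → Fin n → Bool) → Prop :=
    fun ω => ENNReal.ofReal t' ≤ valIP ω with hE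
  show 1 - (n:ℝ) ^ (-D) ≤ mProb Mn n pn E
  rw [mProb_compl E]
  have hcompl : mProb Mn n pn (fun ω => ¬ E ω) ≤ (n:ℝ) ^ (-D) := by
    set s : Finset (Fin n → Bool) := univ.filter
      (fun x => (univ.filter fun j : Fin n => x j = true).card ≤ K) with hs
    have hcover : ∀ ω, ¬ E ω → ∃ x ∈ s, feasIP ω x := by
      intro ω hω
      rw [hE, not_le] at hω
      obtain ⟨v, hv, hvlt⟩ := sInf_lt_iff.mp hω
      obtain ⟨x, hfx, rfl⟩ := hv
      have hlt : ((univ.filter fun j : Fin n => x j = true).card : ℝ) < t' :=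
        ENNReal.natCast_lt_ofReal.mp hvlt
      exact ⟨x, Finset.mem_filter.mpr ⟨Finset.mem_univ x, Nat.le_floor hlt.le⟩, hfx⟩
    have hub := mProb_union_bound (m := Mn) (n := n) hpn0.le hpnle1 s
      (fun ω => ¬ E ω) (fun x ω => feasIP ω x) hcover
    set B := Real.exp (-((Mn:ℝ) * Real.exp (-(2*pn*(K:ℝ))))) with hB
    have hB0 : 0 ≤ B := (Real.exp_pos _).le
    have hterm : ∀ x ∈ s, mProb Mn n pn (fun ω => feasIP ω x) ≤ B := by
      intro x hx
      rw [mProb_feas x]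
      exact term_bound hpn0.le hpn1 (Finset.mem_filter.mp hx).2
    have hsum : ∑ x ∈ s, mProb Mn n pn (fun ω => feasIP ω x) ≤ (s.card : ℝ) * B := by
      calc ∑ x ∈ s, mProb Mn n pn (fun ω => feasIP ω x) ≤ s.card • B :=
            Finset.sum_le_card_nsmul s _ B hterm
        _ = (s.card : ℝ) * B := by rw [nsmul_eq_mul]
    have hcard : (s.card : ℝ) ≤ ((K:ℝ)+1) * (n:ℝ)^K := by
      have hcs := count_small n K (by omega)
      rw [hs]
      calc ((univ.filter (fun x : Fin n → Bool =>
              (univ.filter fun j : Fin n => x j = true).card ≤ K)).card : ℝ)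
          ≤ (((K+1) * n ^ K : ℕ) : ℝ) := by exact_mod_cast hcs
        _ = ((K:ℝ)+1) * (n:ℝ)^K := by push_cast; ring
    have hfinal : ((K:ℝ)+1) * (n:ℝ)^K * B ≤ (n:ℝ) ^ (-D) := by
      rw [hB]
      exact final_numeric D pn ln T L K Mn n hD hpn0 hpn1 hlnge1 hnR0 hlndef
        hT2 hTD hL hMr hK8
    calc mProb Mn n pn (fun ω => ¬ E ω)
        ≤ ∑ x ∈ s, mProb Mn n pn (fun ω => feasIP ω x) := hub
      _ ≤ (s.card : ℝ) * B := hsum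
      _ ≤ (((K:ℝ)+1) * (n:ℝ)^K) * B := mul_le_mul_of_nonneg_right hcard hB0
      _ ≤ (n:ℝ) ^ (-D) := hfinal
  have := sub_le_sub_left hcompl (1:ℝ)
  linarith
end

section
/- In the asymptotic Bernoulli setting, let X_1, …, X_n be i.i.d. Binomial(m,p). Then there exist constants c > 0 and c̃ > 0, independent of n, such that for all sufficiently large n, P( max_{i∈[n]} X_i ≥ c·E[ max_{i∈[n]} X_i ] ) ≤ n^{−c̃}. -/
open Classical Finset

/-- Probability weight of `n` independent rows of `m` i.i.d. Bernoulli(p) trials;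
row `i` realizes the Binomial(m,p) variable `X i`. -/
noncomputable def bWeight (n m : ℕ) (p : ℝ) (ω : Fin n → Fin m → Bool) : ℝ :=
  ∏ i : Fin n, ∏ j : Fin m, if ω i j then p else 1 - p

/-- Probability of an event for `n` i.i.d. Binomial(m,p) variables. -/
noncomputable def bProb (n m : ℕ) (p : ℝ) (P : (Fin n → Fin m → Bool) → Prop) : ℝ :=
  ∑ ω : Fin n → Fin m → Bool, if P ω then bWeight n m p ω else 0

/-- `X i`: the `i`-th Binomial(m,p) variable (number of successes in row `i`). -/
def Xvar {n m : ℕ} (ω : Fin n → Fin m → Bool) (i : Fin n) : ℕ :=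
  (Finset.univ.filter fun j : Fin m => ω i j = true).card

/-- `max_{i ∈ [n]} X_i`. -/
def maxX {n m : ℕ} (ω : Fin n → Fin m → Bool) : ℕ :=
  Finset.univ.sup (Xvar ω)

/-- `E[max_{i ∈ [n]} X_i]` for `n` i.i.d. Binomial(m,p) variables. -/
noncomputable def expMax (n m : ℕ) (p : ℝ) : ℝ :=
  ∑ ω : Fin n → Fin m → Bool, bWeight n m p ω * (maxX ω : ℝ)

/-!
Let `q t = P(Bin(m, p) ≥ t)` and `M = E[max X_i]`. Since `P(max X_i ≥ t) = 1 - (1 - q t)^n`,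
Markov's inequality gives `t ≤ 2M` whenever `n q t ≥ 1`, so `n q t₁ < 1` for `t₁ = ⌊2M⌋ + 1`.
Conditioning on the first trial and inducting on `m` shows that the binomial tail is
submultiplicative, `q (a + b) ≤ q a * q b`; hence
`P(max X_i ≥ 3 t₁) ≤ n q (3 t₁) ≤ n (q t₁)^3 ≤ n⁻²`. Finally `m n p ≥ 1` for large `n` gives
`P(max X_i ≥ 1) ≥ 1/2`, so `M ≥ 1/2` and `3 t₁ ≤ 12 M`.
-/

open Filter

section WeightedProb

variable {Ω : Type*} [Fintype Ω]

noncomputable def weightedProb (w : Ω → ℝ) (A : Ω → Prop) : ℝ :=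
  ∑ ω, if A ω then w ω else 0

variable {w : Ω → ℝ}

lemma weightedProb_nonneg (hw : ∀ ω, 0 ≤ w ω) (A : Ω → Prop) : 0 ≤ weightedProb w A :=
  sum_nonneg fun ω _ => by split_ifs <;> simp [hw ω]

lemma weightedProb_mono (hw : ∀ ω, 0 ≤ w ω) {A B : Ω → Prop} (h : ∀ ω, A ω → B ω) :
    weightedProb w A ≤ weightedProb w B :=
  sum_le_sum fun ω _ => by
    by_cases hA : A ω
    · simp [hA, h ω hA]
    · by_cases hB : B ω <;> simp [hA, hB, hw ω]

lemma weightedProb_not (A : Ω → Prop) :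
    weightedProb w (fun ω => ¬ A ω) = ∑ ω, w ω - weightedProb w A := by
  rw [eq_sub_iff_add_eq, weightedProb, weightedProb, ← sum_add_distrib]
  exact sum_congr rfl fun ω _ => by by_cases h : A ω <;> simp [h]

lemma weightedProb_le_sum (hw : ∀ ω, 0 ≤ w ω) (A : Ω → Prop) :
    weightedProb w A ≤ ∑ ω, w ω := by
  linarith [weightedProb_not (w := w) A, weightedProb_nonneg hw fun ω => ¬ A ω]

lemma mul_weightedProb_le_sum_mul (hw : ∀ ω, 0 ≤ w ω) {X : Ω → ℝ} (hX : ∀ ω, 0 ≤ X ω)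
    (t : ℝ) : t * weightedProb w (fun ω => t ≤ X ω) ≤ ∑ ω, w ω * X ω := by
  rw [weightedProb, mul_sum]
  refine sum_le_sum fun ω _ => ?_
  split_ifs with h
  · rw [mul_comm]
    exact mul_le_mul_of_nonneg_left h (hw ω)
  · rw [mul_zero]
    exact mul_nonneg (hw ω) (hX ω)

end WeightedProb

section Bernoulli

variable {p : ℝ} {m : ℕ}

noncomputable def bernWeight (p : ℝ) {m : ℕ} (a : Fin m → Bool) : ℝ :=
  ∏ j, if a j then p else 1 - p

def numTrue {m : ℕ} (a : Fin m → Bool) : ℕ := #{j | a j = true}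

noncomputable def binomTail (p : ℝ) (m t : ℕ) : ℝ :=
  weightedProb (bernWeight p) fun a : Fin m → Bool => t ≤ numTrue a

lemma bernWeight_nonneg (hp0 : 0 ≤ p) (hp1 : p ≤ 1) (a : Fin m → Bool) :
    0 ≤ bernWeight p a :=
  prod_nonneg fun j _ => by split_ifs <;> linarith

lemma sum_bernWeight : ∑ a : Fin m → Bool, bernWeight p a = 1 := by
  have h := Fintype.prod_sum fun (_ : Fin m) (b : Bool) => if b then p else 1 - p
  simp only [Fintype.sum_bool, if_true, Bool.false_eq_true, if_false, add_sub_cancel,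
    prod_const_one] at h
  exact h.symm

lemma sum_pi_fin_succ {β M : Type*} [Fintype β] [AddCommMonoid M]
    (f : (Fin (m + 1) → β) → M) :
    ∑ a, f a = ∑ b : β, ∑ a : Fin m → β, f (Fin.cons b a) := by
  rw [← (Fin.consEquiv fun _ => β).sum_comp, Fintype.sum_prod_type]
  rfl

lemma bernWeight_cons (b : Bool) (a : Fin m → Bool) :
    bernWeight p (Fin.cons b a : Fin (m + 1) → Bool) =
      (if b then p else 1 - p) * bernWeight p a := by
  simp [bernWeight, Fin.prod_univ_succ]

lemma numTrue_cons (b : Bool) (a : Fin m → Bool) :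
    numTrue (Fin.cons b a : Fin (m + 1) → Bool) = (if b then 1 else 0) + numTrue a := by
  simp only [numTrue, card_filter, Fin.sum_univ_succ, Fin.cons_zero, Fin.cons_succ]

lemma binomTail_nonneg (hp0 : 0 ≤ p) (hp1 : p ≤ 1) (t : ℕ) : 0 ≤ binomTail p m t :=
  weightedProb_nonneg (bernWeight_nonneg hp0 hp1) _

lemma binomTail_le_one (hp0 : 0 ≤ p) (hp1 : p ≤ 1) (t : ℕ) : binomTail p m t ≤ 1 :=
  (weightedProb_le_sum (bernWeight_nonneg hp0 hp1) _).trans_eq sum_bernWeight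

lemma binomTail_succ_le (hp0 : 0 ≤ p) (hp1 : p ≤ 1) (t : ℕ) :
    binomTail p m (t + 1) ≤ binomTail p m t :=
  weightedProb_mono (bernWeight_nonneg hp0 hp1) fun _ h => (Nat.le_succ t).trans h

@[simp]
lemma binomTail_zero_right : binomTail p m 0 = 1 := by
  simp [binomTail, weightedProb, sum_bernWeight]

@[simp]
lemma binomTail_zero_succ (t : ℕ) : binomTail p 0 (t + 1) = 0 := by
  simp [binomTail, weightedProb, numTrue]

lemma binomTail_succ_succ (t : ℕ) :
    binomTail p (m + 1) (t + 1) = p * binomTail p m t + (1 - p) * binomTail p m (t + 1) := by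
  simp only [binomTail, weightedProb, sum_pi_fin_succ, Fintype.sum_bool, bernWeight_cons,
    numTrue_cons, mul_sum, mul_ite, mul_zero, if_true, Bool.false_eq_true, if_false, zero_add]
  simp [add_comm 1]

lemma binomTail_le_binomTail_succ (hp0 : 0 ≤ p) (hp1 : p ≤ 1) (t : ℕ) :
    binomTail p m t ≤ binomTail p (m + 1) t := by
  cases t with
  | zero => simp
  | succ t =>
    rw [binomTail_succ_succ]
    nlinarith [binomTail_succ_le (m := m) hp0 hp1 t]

theorem binomTail_add_le_mul (hp0 : 0 ≤ p) (hp1 : p ≤ 1) (a b : ℕ) :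
    binomTail p m (a + b) ≤ binomTail p m a * binomTail p m b := by
  induction m generalizing a with
  | zero => cases a <;> simp [add_right_comm _ 1]
  | succ m ih =>
    cases a with
    | zero => simp
    | succ a =>
      have h1p : 0 ≤ 1 - p := by linarith
      have iha := ih a
      have iha' := ih (a + 1)
      calc binomTail p (m + 1) (a + 1 + b)
          = p * binomTail p m (a + b) + (1 - p) * binomTail p m (a + 1 + b) := by
            rw [add_right_comm, binomTail_succ_succ]
        _ ≤ p * (binomTail p m a * binomTail p m b)
              + (1 - p) * (binomTail p m (a + 1) * binomTail p m b) := by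
            gcongr
        _ = binomTail p (m + 1) (a + 1) * binomTail p m b := by
            rw [binomTail_succ_succ]; ring
        _ ≤ binomTail p (m + 1) (a + 1) * binomTail p (m + 1) b :=
            mul_le_mul_of_nonneg_left (binomTail_le_binomTail_succ hp0 hp1 b)
              (binomTail_nonneg hp0 hp1 _)

lemma one_sub_binomTail_one : 1 - binomTail p m 1 = (1 - p) ^ m := by
  induction m with
  | zero => simp
  | succ m ih =>
    rw [binomTail_succ_succ, binomTail_zero_right, pow_succ, ← ih]
    ring

end Bernoulli

section Rows

variable {n m : ℕ} {p : ℝ}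

lemma bWeight_nonneg (hp0 : 0 ≤ p) (hp1 : p ≤ 1) (ω : Fin n → Fin m → Bool) :
    0 ≤ bWeight n m p ω :=
  prod_nonneg fun i _ => bernWeight_nonneg hp0 hp1 (ω i)

lemma sum_bWeight : ∑ ω : Fin n → Fin m → Bool, bWeight n m p ω = 1 := by
  rw [show (∑ ω, bWeight n m p ω) = ∏ _i : Fin n, ∑ a : Fin m → Bool, bernWeight p a from
    (Fintype.prod_sum fun _ a => bernWeight p a).symm]
  simp [sum_bernWeight]

lemma bProb_forall (A : (Fin m → Bool) → Prop) :
    bProb n m p (fun ω => ∀ i, A (ω i)) = weightedProb (bernWeight p) A ^ n := by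
  calc bProb n m p (fun ω => ∀ i, A (ω i))
      = ∑ ω : Fin n → Fin m → Bool, ∏ i, if A (ω i) then bernWeight p (ω i) else 0 :=
        Fintype.sum_congr _ _ fun ω => by
          rw [Fintype.prod_ite_zero]
          congr
    _ = weightedProb (bernWeight p) A ^ n := by
        rw [← Fintype.prod_sum fun (_ : Fin n) a => if A a then bernWeight p a else 0,
          prod_const, card_univ, Fintype.card_fin]
        rfl

lemma bProb_le_maxX_eq_one_sub_pow {t : ℕ} (ht : 1 ≤ t) :
    bProb n m p (fun ω => t ≤ maxX ω) = 1 - (1 - binomTail p m t) ^ n := by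
  have hmax : (fun ω : Fin n → Fin m → Bool => ¬ t ≤ maxX ω) =
      fun ω => ∀ i, ¬ t ≤ numTrue (ω i) := by
    ext ω
    simp only [not_le, maxX, Finset.sup_lt_iff (show (⊥ : ℕ) < t from ht), mem_univ, true_implies]
    rfl
  have hrow := weightedProb_not (w := bernWeight p) fun a : Fin m → Bool => t ≤ numTrue a
  have hcompl := weightedProb_not (w := bWeight n m p) fun ω => t ≤ maxX ω
  rw [sum_bernWeight] at hrow
  rw [sum_bWeight] at hcompl
  change bProb n m p _ = 1 - bProb n m p _ at hcompl
  rw [hmax, bProb_forall fun a => ¬ t ≤ numTrue a, hrow] at hcompl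
  rw [binomTail]
  linarith

lemma mul_bProb_le_expMax (hp0 : 0 ≤ p) (hp1 : p ≤ 1) (t : ℕ) :
    t * bProb n m p (fun ω => t ≤ maxX ω) ≤ expMax n m p := by
  have h := mul_weightedProb_le_sum_mul (w := bWeight n m p) (bWeight_nonneg hp0 hp1)
    (X := fun ω => (maxX ω : ℝ)) (fun _ => Nat.cast_nonneg _) t
  simp only [Nat.cast_le] at h
  exact h

end Rows

lemma one_sub_pow_le_half {x : ℝ} {k : ℕ} (hx1 : x ≤ 1) (hkx : 1 ≤ k * x) :
    (1 - x) ^ k ≤ 1 / 2 :=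
  calc (1 - x) ^ k ≤ Real.exp (-x) ^ k :=
        pow_le_pow_left₀ (by linarith) (Real.one_sub_le_exp_neg x) k
    _ = Real.exp (-(k * x)) := by rw [← Real.exp_nat_mul]; ring_nf
    _ ≤ Real.exp (-1) := Real.exp_le_exp.mpr (by linarith)
    _ ≤ 1 / 2 := Real.exp_neg_one_lt_half.le

section MaxBound

variable {n m : ℕ} {p : ℝ}

lemma le_two_mul_expMax (hp0 : 0 ≤ p) (hp1 : p ≤ 1) {t : ℕ} (ht : 1 ≤ t)
    (h : (1 - binomTail p m t) ^ n ≤ 1 / 2) : (t : ℝ) ≤ 2 * expMax n m p := by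
  have hM := mul_bProb_le_expMax (n := n) (m := m) hp0 hp1 t
  rw [bProb_le_maxX_eq_one_sub_pow ht] at hM
  nlinarith [(Nat.cast_nonneg t : (0 : ℝ) ≤ t)]

theorem bProb_twelve_mul_expMax_le (hp0 : 0 ≤ p) (hp1 : p ≤ 1) (hmnp : 1 ≤ m * n * p) :
    bProb n m p (fun ω => 12 * expMax n m p ≤ maxX ω) ≤ (n : ℝ) ^ (-2 : ℝ) := by
  set M := expMax n m p
  have hn : (0 : ℝ) < n := by
    rcases Nat.eq_zero_or_pos n with rfl | hn
    · simp at hmnp; linarith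
    · exact_mod_cast hn
  have hq0 := binomTail_nonneg (m := m) hp0 hp1
  have hq1 := binomTail_le_one (m := m) hp0 hp1
  have hM : 1 / 2 ≤ M := by
    have h1 := le_two_mul_expMax (n := n) (m := m) hp0 hp1 le_rfl (by
      rw [one_sub_binomTail_one, ← pow_mul]
      exact one_sub_pow_le_half hp1 (by push_cast; linarith))
    push_cast at h1
    linarith
  set t := ⌊2 * M⌋₊ + 1
  have hMt : 2 * M < t := by
    simp only [t, Nat.cast_add, Nat.cast_one]
    exact Nat.lt_floor_add_one _
  have hnq : n * binomTail p m t < 1 := by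
    by_contra! h
    linarith [le_two_mul_expMax hp0 hp1 (Nat.le_add_left 1 _)
      (one_sub_pow_le_half (hq1 t) h)]
  have h3t : ((3 * t : ℕ) : ℝ) ≤ 12 * M := by
    have := Nat.floor_le (show 0 ≤ 2 * M by linarith)
    simp only [t, Nat.cast_mul, Nat.cast_add, Nat.cast_one, Nat.cast_ofNat]
    linarith
  calc bProb n m p (fun ω => 12 * M ≤ maxX ω)
      ≤ bProb n m p (fun ω => 3 * t ≤ maxX ω) :=
        weightedProb_mono (bWeight_nonneg hp0 hp1) fun ω h => by exact_mod_cast h3t.trans h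
    _ = 1 - (1 - binomTail p m (3 * t)) ^ n := bProb_le_maxX_eq_one_sub_pow (by omega)
    _ ≤ n * binomTail p m (3 * t) := by
        have h := one_add_mul_le_pow (show -2 ≤ -binomTail p m (3 * t) by linarith [hq1 (3 * t)]) n
        rw [← sub_eq_add_neg] at h
        linarith
    _ ≤ n * binomTail p m t ^ 3 := by
        gcongr
        calc binomTail p m (3 * t) = binomTail p m (t + (t + t)) := by ring_nf
          _ ≤ binomTail p m t * (binomTail p m t * binomTail p m t) := by
              refine (binomTail_add_le_mul hp0 hp1 _ _).trans ?_
              gcongr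
              exacts [hq0 t, binomTail_add_le_mul hp0 hp1 _ _]
          _ = binomTail p m t ^ 3 := by ring
    _ ≤ (n : ℝ) ^ (-2 : ℝ) := by
        rw [Real.rpow_neg hn.le, Real.rpow_two, ← one_div, le_div_iff₀ (by positivity)]
        calc n * binomTail p m t ^ 3 * n ^ 2 = (n * binomTail p m t) ^ 3 := by ring
          _ ≤ 1 := pow_le_one₀ (mul_nonneg hn.le (hq0 t)) hnq.le

end MaxBound

lemma one_le_mul_mul_of_rpow_le {x y z c δ : ℝ} (hx : 0 < x) (hc : 0 ≤ c)
    (hy : c * x ^ c ≤ y) (hz : x ^ (-δ) ≤ z) (h : 1 ≤ c * x ^ (1 + c - δ)) : 1 ≤ y * x * z := by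
  calc 1 ≤ c * x ^ (1 + c - δ) := h
    _ = c * x ^ c * x * x ^ (-δ) := by
        rw [show 1 + c - δ = c + 1 + -δ by ring, Real.rpow_add hx, Real.rpow_add_one hx.ne']
        ring
    _ ≤ y * x * z := by
        have hy0 : 0 ≤ y := (mul_nonneg hc (Real.rpow_nonneg hx.le c)).trans hy
        gcongr

theorem stmt11_general (m : ℕ → ℕ) (p : ℕ → ℝ) (δ : ℝ)
    (hδ : 0 < δ ∧ δ < 1)
    (hm : ∃ c C : ℝ, 0 < c ∧ 0 < C ∧ ∃ N : ℕ, ∀ n ≥ N,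
      c * (n : ℝ) ^ c ≤ (m n : ℝ) ∧ (m n : ℝ) ≤ C * (n : ℝ) ^ C)
    (hp : ∃ N : ℕ, ∀ n ≥ N, (n : ℝ) ^ (-δ) ≤ p n ∧ p n ≤ 1 / 2) :
    ∃ c ct : ℝ, 0 < c ∧ 0 < ct ∧ ∃ N : ℕ, ∀ n ≥ N,
      bProb n (m n) (p n) (fun ω => c * expMax n (m n) (p n) ≤ (maxX ω : ℝ)) ≤
        (n : ℝ) ^ (-ct) := by
  obtain ⟨c, C, hc, -, N₁, hm⟩ := hm
  obtain ⟨N₂, hp⟩ := hp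
  have hgrowth : Tendsto (fun n : ℕ => c * (n : ℝ) ^ (1 + c - δ)) atTop atTop :=
    ((tendsto_rpow_atTop (by linarith)).const_mul_atTop hc).comp tendsto_natCast_atTop_atTop
  obtain ⟨N, hN⟩ := eventually_atTop.mp
    ((hgrowth.eventually_ge_atTop 1).and (eventually_ge_atTop (max 1 (max N₁ N₂))))
  refine ⟨12, 2, by norm_num, by norm_num, N, fun n hn => ?_⟩
  obtain ⟨hgrowth_n, hnN⟩ := hN n hn
  obtain ⟨hp_lower, hp_upper⟩ := hp n (by omega)
  have hn_pos : (0 : ℝ) < n := by exact_mod_cast (by omega : 0 < n)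
  have hp_nonneg : 0 ≤ p n := (Real.rpow_nonneg hn_pos.le _).trans hp_lower
  exact bProb_twelve_mul_expMax_le hp_nonneg (by linarith)
    (one_le_mul_mul_of_rpow_le hn_pos hc.le (hm n (by omega)).1 hp_lower hgrowth_n)

/-- In the asymptotic Bernoulli setting, there exist constants
`c, c̃ > 0` such that for all large `n`,
`P(max_i X_i ≥ c E[max_i X_i]) ≤ n^{-c̃}` for `n` i.i.d. Binomial(m,p) variables. -/
theorem stmt11 (m : ℕ → ℕ) (p : ℕ → ℝ) (δ : ℝ)
    (hδ : 0 < δ ∧ δ < 1)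
    (hp0 : ∀ n, 0 < p n ∧ p n ≤ 1)
    (hm : ∃ c C : ℝ, 0 < c ∧ 0 < C ∧ ∃ N : ℕ, ∀ n ≥ N,
      c * (n : ℝ) ^ c ≤ (m n : ℝ) ∧ (m n : ℝ) ≤ C * (n : ℝ) ^ C)
    (hp : ∃ N : ℕ, ∀ n ≥ N, (n : ℝ) ^ (-δ) ≤ p n ∧ p n ≤ 1 / 2) :
    ∃ c ct : ℝ, 0 < c ∧ 0 < ct ∧ ∃ N : ℕ, ∀ n ≥ N,
      bProb n (m n) (p n) (fun ω => c * expMax n (m n) (p n) ≤ (maxX ω : ℝ)) ≤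
        (n : ℝ) ^ (-ct) :=
  stmt11_general m p δ hδ hm hp
end
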